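/- arXiv:1409.4092 — 3 statements merged into one kernel-verified Lean document; each statement's English description precedes it below -/
import Mathlib

section
/- Let P be a finite set of at least two points in ℝ², L a line, x* the constrained 1-center of P on L, and F the set of farthest points of P from x*. If x* lies in the convex hull of F, then x* is the (unconstrained) Euclidean 1-center of P, i.e., x* minimizes max_{p∈P} dist(x,p) over all x ∈ ℝ². -/
/-!
Given any `y`, the linear functional `⟪y - c, ·⟫` attains its minimum over the convex hull of `F`
at a point of `F`, so some farthest point `p` satisfies `⟪y - c, p - c⟫ ≤ 0`. The angle at `c` in
the triangle `c p y` is then not acute, hence `dist y p ≥ dist c p`, which is the largest distance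
from `c` to `P`.
-/

open scoped RealInnerProductSpace

section InnerProductSpace

variable {E : Type*} [NormedAddCommGroup E] [InnerProductSpace ℝ E]

theorem exists_inner_sub_nonpos_of_mem_convexHull {s : Set E} {c : E}
    (hc : c ∈ convexHull ℝ s) (v : E) : ∃ p ∈ s, ⟪v, p - c⟫ ≤ 0 := by
  obtain ⟨p, hps, hp⟩ := ((innerₗ E v).concaveOn convex_univ).exists_le_of_mem_convexHull
    (Set.subset_univ s) hc
  exact ⟨p, hps, by simpa [inner_sub_right] using hp⟩

theorem dist_le_dist_of_inner_sub_nonpos {c p y : E} (h : ⟪y - c, p - c⟫ ≤ 0) :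
    dist c p ≤ dist y p := by
  have hsq : ‖y - p‖ ^ 2 = ‖y - c‖ ^ 2 - 2 * ⟪y - c, p - c⟫ + ‖p - c‖ ^ 2 := by
    rw [← norm_sub_sq_real, sub_sub_sub_cancel_right]
  rw [dist_comm, dist_eq_norm, dist_eq_norm]
  nlinarith [norm_nonneg (y - p), norm_nonneg (p - c), sq_nonneg ‖y - c‖]

theorem Finset.sup'_dist_le_of_mem_convexHull_farthest (P : Finset E) (hP : P.Nonempty) {c : E}
    (hc : c ∈ convexHull ℝ (↑(P.filter fun p => dist p c = P.sup' hP (dist · c)) : Set E))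
    (y : E) : P.sup' hP (dist c ·) ≤ P.sup' hP (dist y ·) := by
  obtain ⟨p, hpF, hp⟩ := exists_inner_sub_nonpos_of_mem_convexHull hc (y - c)
  obtain ⟨hpP, hp_far⟩ := Finset.mem_filter.mp hpF
  calc P.sup' hP (dist c ·) = P.sup' hP (dist · c) := by simp only [dist_comm]
    _ = dist c p := by rw [← hp_far, dist_comm]
    _ ≤ dist y p := dist_le_dist_of_inner_sub_nonpos hp
    _ ≤ P.sup' hP (dist y ·) := Finset.le_sup' _ hpP

end InnerProductSpace

theorem stmt5_general (P : Finset (EuclideanSpace ℝ (Fin 2))) (hP : P.Nonempty)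
    (xstar : EuclideanSpace ℝ (Fin 2))
    (F : Finset (EuclideanSpace ℝ (Fin 2)))
    (hF : F = P.filter (fun p => dist p xstar = P.sup' hP (fun q => dist q xstar)))
    (hhull : xstar ∈ convexHull ℝ (F : Set (EuclideanSpace ℝ (Fin 2)))) :
    ∀ x, P.sup' hP (fun p => dist xstar p) ≤ P.sup' hP (fun p => dist x p) := by
  subst hF
  exact P.sup'_dist_le_of_mem_convexHull_farthest hP hhull

/-- If the constrained 1-center `xstar` of `P` on the line `L` lies in the convex hull of
the set `F` of points of `P` farthest from `xstar`, then `xstar` is the unconstrained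
Euclidean 1-center of `P`. -/
theorem stmt5 (P : Finset (EuclideanSpace ℝ (Fin 2))) (hP : P.Nonempty) (h2 : 2 ≤ P.card)
    (L : AffineSubspace ℝ (EuclideanSpace ℝ (Fin 2)))
    (hL : Module.finrank ℝ L.direction = 1)
    (xstar : EuclideanSpace ℝ (Fin 2)) (hxL : xstar ∈ L)
    (hxmin : ∀ x ∈ L, P.sup' hP (fun p => dist xstar p) ≤ P.sup' hP (fun p => dist x p))
    (F : Finset (EuclideanSpace ℝ (Fin 2)))
    (hF : F = P.filter (fun p => dist p xstar = P.sup' hP (fun q => dist q xstar)))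
    (hhull : xstar ∈ convexHull ℝ (F : Set (EuclideanSpace ℝ (Fin 2)))) :
    ∀ x, P.sup' hP (fun p => dist xstar p) ≤ P.sup' hP (fun p => dist x p) :=
  stmt5_general P hP xstar F hF hhull
end

section
/- Let T be a finite tree with nonnegative vertex weights w and positive edge lengths, inducing the path metric d. Then the function SumWD(x) = Σ_{v ∈ V} w(v)·d(x,v), defined for points x on the edges of T (the geometric realization of T), attains its minimum at some vertex of T. -/
/-- Length of a walk with respect to edge lengths `ℓ`. -/
def walkLength {V : Type*} {G : SimpleGraph V} (ℓ : V → V → ℝ) :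
    ∀ {u v : V}, G.Walk u v → ℝ :=
  fun p => (p.darts.map fun d => ℓ d.toProd.1 d.toProd.2).sum

/-- Shortest-path (geodesic) distance between vertices of `G` with edge lengths `ℓ`. -/
noncomputable def vdist {V : Type*} (G : SimpleGraph V) (ℓ : V → V → ℝ) (u v : V) : ℝ :=
  sInf {x | ∃ p : G.Walk u v, x = walkLength ℓ p}

/-- Distance from the point of the geometric realization lying on edge `(u,v)` at
parameter `s ∈ [0,1]` (distance `s * ℓ u v` from `u`) to the vertex `z`. -/
noncomputable def pdist {V : Type*} (G : SimpleGraph V) (ℓ : V → V → ℝ)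
    (u v : V) (s : ℝ) (z : V) : ℝ :=
  min (s * ℓ u v + vdist G ℓ u z) ((1 - s) * ℓ u v + vdist G ℓ v z)

lemma walkLength_nonneg {V : Type*} {G : SimpleGraph V} {ℓ : V → V → ℝ}
    (h : ∀ u v, G.Adj u v → 0 ≤ ℓ u v) {u v : V} (p : G.Walk u v) :
    0 ≤ walkLength ℓ p := by
  apply List.sum_nonneg
  intro x hx
  obtain ⟨d, _, rfl⟩ := List.mem_map.mp hx
  exact h _ _ d.adj

lemma walkLength_cons {V : Type*} {G : SimpleGraph V} {ℓ : V → V → ℝ}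
    {u v z : V} (h : G.Adj u v) (p : G.Walk v z) :
    walkLength ℓ (SimpleGraph.Walk.cons h p) = ℓ u v + walkLength ℓ p := by
  simp [walkLength]

lemma vdist_bddBelow {V : Type*} {G : SimpleGraph V} {ℓ : V → V → ℝ}
    (h : ∀ u v, G.Adj u v → 0 ≤ ℓ u v) (u v : V) :
    BddBelow {x | ∃ p : G.Walk u v, x = walkLength ℓ p} :=
  ⟨0, fun _ ⟨p, hp⟩ => hp ▸ walkLength_nonneg h p⟩

lemma vdist_le {V : Type*} {G : SimpleGraph V} {ℓ : V → V → ℝ}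
    (h : ∀ u v, G.Adj u v → 0 ≤ ℓ u v) {u v : V} (p : G.Walk u v) :
    vdist G ℓ u v ≤ walkLength ℓ p :=
  csInf_le (vdist_bddBelow h u v) ⟨p, rfl⟩

lemma vdist_triangle_edge {V : Type*} {G : SimpleGraph V} {ℓ : V → V → ℝ}
    (h : ∀ u v, G.Adj u v → 0 ≤ ℓ u v) (hconn : G.Connected)
    {u v : V} (huv : G.Adj u v) (z : V) :
    vdist G ℓ u z ≤ ℓ u v + vdist G ℓ v z := by
  have hne : {x | ∃ p : G.Walk v z, x = walkLength ℓ p}.Nonempty :=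
    ⟨_, (hconn.preconnected v z).some, rfl⟩
  rw [vdist, ← sub_le_iff_le_add']
  apply le_csInf hne
  rintro x ⟨p, rfl⟩
  have := vdist_le h (SimpleGraph.Walk.cons huv p)
  rw [walkLength_cons, vdist] at this
  linarith

/-- Hakimi: the weighted sum of distances `SumWD(x) = Σ_v w(v)·d(x,v)`, over all points
`x` of the geometric realization of a finite tree, attains its minimum at a vertex. -/
theorem stmt9 {V : Type*} [Fintype V] [DecidableEq V] [Nonempty V]
    (G : SimpleGraph V) (hG : G.IsTree)
    (w : V → ℝ) (hw : ∀ v, 0 ≤ w v)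
    (ℓ : V → V → ℝ) (hℓsym : ∀ u v, ℓ u v = ℓ v u)
    (hℓpos : ∀ u v, G.Adj u v → 0 < ℓ u v) :
    ∃ v₀ : V, ∀ u v : V, G.Adj u v → ∀ s ∈ Set.Icc (0:ℝ) 1,
      (∑ z, w z * vdist G ℓ v₀ z) ≤ ∑ z, w z * pdist G ℓ u v s z := by
  have hℓ : ∀ u v, G.Adj u v → 0 ≤ ℓ u v := fun u v h => (hℓpos u v h).le
  have hconn := hG.isConnected
  obtain ⟨v₀, -, hv₀⟩ := Finset.exists_min_image Finset.univ
    (fun x => ∑ z, w z * vdist G ℓ x z) ⟨Classical.arbitrary V, Finset.mem_univ _⟩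
  refine ⟨v₀, fun u v huv s hs => ?_⟩
  obtain ⟨hs0, hs1⟩ := hs
  have hFu := hv₀ u (Finset.mem_univ u)
  have hFv := hv₀ v (Finset.mem_univ v)
  have key : ∀ z, w z * ((1 - s) * vdist G ℓ u z + s * vdist G ℓ v z)
      ≤ w z * pdist G ℓ u v s z := by
    intro z
    apply mul_le_mul_of_nonneg_left _ (hw z)
    have h1 := vdist_triangle_edge hℓ hconn huv z
    have h2 := vdist_triangle_edge hℓ hconn huv.symm z
    rw [← hℓsym u v] at h2
    apply le_min
    · nlinarith
    · nlinarith
  calc (∑ z, w z * vdist G ℓ v₀ z)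
      = (1 - s) * (∑ z, w z * vdist G ℓ v₀ z) + s * (∑ z, w z * vdist G ℓ v₀ z) := by ring
    _ ≤ (1 - s) * (∑ z, w z * vdist G ℓ u z) + s * (∑ z, w z * vdist G ℓ v z) := by
        gcongr <;> linarith
    _ = ∑ z, w z * ((1 - s) * vdist G ℓ u z + s * vdist G ℓ v z) := by
        rw [Finset.mul_sum, Finset.mul_sum, ← Finset.sum_add_distrib]
        exact Finset.sum_congr rfl fun z _ => by ring
    _ ≤ ∑ z, w z * pdist G ℓ u v s z := Finset.sum_le_sum fun z _ => key z
end

section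
/- Let T be a finite tree with positive vertex weights w and positive edge lengths. A vertex v of T minimizes SumWD(v) = Σ_{u∈V} w(u) d(v,u) over all vertices (i.e., v is a weighted median) if and only if v minimizes MaxWS(v) = max over neighbors v' of v of w(T_{v'}(v)) over all vertices (i.e., v is a weighted centroid), where w(T_{v'}(v)) is the total weight of the component of T − v containing v'. -/
/-- The vertices of the connected component of `G - v` containing `t`. -/
def branch {V : Type*} (G : SimpleGraph V) (v t : V) : Set V :=
  {u | ∃ p : G.Walk t u, v ∉ p.support}

/-- `SumWD(v) = Σ_u w(u) d(v,u)`. -/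
noncomputable def sumWD {V : Type*} [Fintype V] (G : SimpleGraph V) (ℓ : V → V → ℝ)
    (w : V → ℝ) (v : V) : ℝ :=
  ∑ u, w u * vdist G ℓ v u

/-- `MaxWS(v)`: the maximum total weight of a component of `G - v`. -/
noncomputable def maxWS {V : Type*} (G : SimpleGraph V) (w : V → ℝ) (v : V) : ℝ :=
  sSup {x | ∃ t, G.Adj v t ∧ x = ∑ᶠ u ∈ branch G v t, w u}

namespace KHaux

open SimpleGraph

variable {V : Type*} [Fintype V] [DecidableEq V] {G : SimpleGraph V}

theorem walkLength_cons (ℓ : V → V → ℝ) {u v x : V} (h : G.Adj u v) (p : G.Walk v x) :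
    walkLength ℓ (Walk.cons h p) = ℓ u v + walkLength ℓ p := by
  simp [walkLength]

theorem walkLength_append (ℓ : V → V → ℝ) {u v x : V} (p : G.Walk u v) (q : G.Walk v x) :
    walkLength ℓ (p.append q) = walkLength ℓ p + walkLength ℓ q := by
  simp [walkLength, Walk.darts_append]

theorem walkLength_nonneg {ℓ : V → V → ℝ} (hℓpos : ∀ u v, G.Adj u v → 0 < ℓ u v)
    {u v : V} (p : G.Walk u v) : 0 ≤ walkLength ℓ p := by
  unfold walkLength
  apply List.sum_nonneg
  intro x hx
  simp only [List.mem_map] at hx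
  obtain ⟨d, _, rfl⟩ := hx
  exact (hℓpos _ _ d.adj).le

theorem walkLength_dropUntil_le {ℓ : V → V → ℝ} (hℓpos : ∀ u v, G.Adj u v → 0 < ℓ u v)
    {u v x : V} (p : G.Walk u v) (h : x ∈ p.support) :
    walkLength ℓ (p.dropUntil x h) ≤ walkLength ℓ p := by
  have h1 := congrArg (walkLength ℓ) (p.take_spec h)
  rw [walkLength_append] at h1
  have h2 := walkLength_nonneg hℓpos (p.takeUntil x h)
  linarith

theorem walkLength_bypass_le {ℓ : V → V → ℝ} (hℓpos : ∀ u v, G.Adj u v → 0 < ℓ u v)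
    {u v : V} (p : G.Walk u v) : walkLength ℓ p.bypass ≤ walkLength ℓ p := by
  induction p with
  | nil => simp [Walk.bypass]
  | cons h p ih =>
    simp only [Walk.bypass]
    split_ifs with hs
    · have h1 := walkLength_dropUntil_le hℓpos p.bypass hs
      have h2 := (hℓpos _ _ h).le
      rw [walkLength_cons]
      linarith
    · rw [walkLength_cons, walkLength_cons]
      linarith

/-- The canonical path between two vertices of a tree. -/
noncomputable def cpath (hG : G.IsTree) (u v : V) : G.Walk u v :=
  (hG.existsUnique_path u v).choose

theorem cpath_isPath (hG : G.IsTree) (u v : V) : (cpath hG u v).IsPath :=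
  (hG.existsUnique_path u v).choose_spec.1

theorem cpath_eq (hG : G.IsTree) {u v : V} (p : G.Walk u v) (hp : p.IsPath) :
    p = cpath hG u v :=
  (hG.existsUnique_path u v).choose_spec.2 p hp

theorem vdist_eq (ℓ : V → V → ℝ) (hG : G.IsTree) (hℓpos : ∀ u v, G.Adj u v → 0 < ℓ u v)
    (u v : V) : vdist G ℓ u v = walkLength ℓ (cpath hG u v) := by
  apply le_antisymm
  · exact csInf_le ⟨0, by rintro x ⟨p, rfl⟩; exact walkLength_nonneg hℓpos p⟩ ⟨_, rfl⟩
  · refine le_csInf ⟨_, ⟨cpath hG u v, rfl⟩⟩ ?_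
    rintro x ⟨p, rfl⟩
    calc walkLength ℓ (cpath hG u v) = walkLength ℓ p.bypass := by
          rw [← cpath_eq hG p.bypass p.bypass_isPath]
      _ ≤ walkLength ℓ p := walkLength_bypass_le hℓpos p

theorem mem_branch_iff (hG : G.IsTree) {a b x : V} :
    x ∈ branch G a b ↔ a ∉ (cpath hG b x).support := by
  constructor
  · rintro ⟨p, hp⟩
    rw [← cpath_eq hG p.bypass p.bypass_isPath]
    exact fun ha => hp (p.support_bypass_subset ha)
  · intro h
    exact ⟨_, h⟩

theorem branch_disjoint (hG : G.IsTree) {a b x : V} (hab : G.Adj a b)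
    (h1 : x ∈ branch G a b) (h2 : x ∈ branch G b a) : False := by
  rw [mem_branch_iff hG] at h1 h2
  have hp : (Walk.cons hab (cpath hG b x)).IsPath := (cpath_isPath hG b x).cons h1
  have heq := cpath_eq hG _ hp
  apply h2
  rw [← heq]
  simp [Walk.support_cons, Walk.start_mem_support]

theorem branch_cover (hG : G.IsTree) {a b x : V} (hab : G.Adj a b)
    (h : x ∉ branch G a b) : x ∈ branch G b a := by
  rw [mem_branch_iff hG] at h ⊢
  push_neg at h
  have hp := cpath_isPath hG b x
  have hdrop : ((cpath hG b x).dropUntil a h).IsPath := hp.dropUntil h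
  rw [← cpath_eq hG _ hdrop]
  intro hb
  have hnodup := hp.support_nodup
  rw [← (cpath hG b x).take_spec h, Walk.support_append] at hnodup
  have hdisj := List.disjoint_of_nodup_append hnodup
  have hb_take : b ∈ ((cpath hG b x).takeUntil a h).support := Walk.start_mem_support _
  have hb_tail : b ∈ (((cpath hG b x).dropUntil a h).support).tail := by
    have hcons := Walk.support_eq_cons ((cpath hG b x).dropUntil a h)
    rw [hcons] at hb
    rcases List.mem_cons.mp hb with h' | h'
    · exact absurd h' hab.ne'
    · exact h'
  exact hdisj hb_take hb_tail

theorem vdist_branch (ℓ : V → V → ℝ) (hG : G.IsTree)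
    (hℓpos : ∀ u v, G.Adj u v → 0 < ℓ u v) {a b x : V} (hab : G.Adj a b)
    (h : x ∈ branch G a b) : vdist G ℓ a x = ℓ a b + vdist G ℓ b x := by
  rw [mem_branch_iff hG] at h
  have hp : (Walk.cons hab (cpath hG b x)).IsPath := (cpath_isPath hG b x).cons h
  rw [vdist_eq ℓ hG hℓpos, vdist_eq ℓ hG hℓpos, ← cpath_eq hG _ hp, walkLength_cons]

/-- branch weight -/
noncomputable def WB (G : SimpleGraph V) (w : V → ℝ) (a b : V) : ℝ :=
  ∑ᶠ u ∈ branch G a b, w u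

theorem WB_eq (w : V → ℝ) (a b : V) :
    WB G w a b = ∑ x ∈ (Set.toFinite (branch G a b)).toFinset, w x :=
  finsum_mem_eq_finite_toFinset_sum _ _

theorem WB_mono {w : V → ℝ} (hw : ∀ v, 0 < w v) {a b c d : V}
    (h : branch G a b ⊆ branch G c d) : WB G w a b ≤ WB G w c d := by
  rw [WB_eq, WB_eq]
  apply Finset.sum_le_sum_of_subset_of_nonneg
  · rw [Set.Finite.toFinset_subset, Set.Finite.coe_toFinset]; exact h
  · exact fun x _ _ => (hw x).le

theorem WB_add (hG : G.IsTree) (w : V → ℝ) {a b : V} (hab : G.Adj a b) :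
    WB G w a b + WB G w b a = ∑ u, w u := by
  rw [WB_eq, WB_eq, ← Finset.sum_union]
  · apply Finset.sum_congr _ (fun _ _ => rfl)
    apply Finset.eq_univ_of_forall
    intro x
    rw [Finset.mem_union, Set.Finite.mem_toFinset, Set.Finite.mem_toFinset]
    by_cases hx : x ∈ branch G a b
    · exact Or.inl hx
    · exact Or.inr (branch_cover hG hab hx)
  · rw [Finset.disjoint_left]
    intro x hx1 hx2
    rw [Set.Finite.mem_toFinset] at hx1 hx2
    exact branch_disjoint hG hab hx1 hx2

theorem sumWD_sub (ℓ : V → V → ℝ) (hG : G.IsTree) (w : V → ℝ)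
    (hℓsym : ∀ u v, ℓ u v = ℓ v u) (hℓpos : ∀ u v, G.Adj u v → 0 < ℓ u v)
    {a b : V} (hab : G.Adj a b) :
    sumWD G ℓ w a - sumWD G ℓ w b = ℓ a b * (WB G w a b - WB G w b a) := by
  classical
  unfold sumWD
  rw [← Finset.sum_sub_distrib]
  have hpt : ∀ x : V, w x * vdist G ℓ a x - w x * vdist G ℓ b x
      = if x ∈ branch G a b then ℓ a b * w x else -(ℓ a b * w x) := by
    intro x
    by_cases hx : x ∈ branch G a b
    · rw [if_pos hx, vdist_branch ℓ hG hℓpos hab hx]; ring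
    · rw [if_neg hx, vdist_branch ℓ hG hℓpos hab.symm (branch_cover hG hab hx), hℓsym b a]
      ring
  rw [Finset.sum_congr rfl fun x _ => hpt x, Finset.sum_ite, Finset.sum_neg_distrib,
    ← Finset.mul_sum, ← Finset.mul_sum, WB_eq, WB_eq]
  have h1 : Finset.univ.filter (fun x => x ∈ branch G a b)
      = (Set.toFinite (branch G a b)).toFinset := by
    ext x
    simp only [Finset.mem_filter, Finset.mem_univ, true_and, Set.Finite.mem_toFinset]
  have h2 : Finset.univ.filter (fun x => x ∉ branch G a b)
      = (Set.toFinite (branch G b a)).toFinset := by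
    ext x
    simp only [Finset.mem_filter, Finset.mem_univ, true_and, Set.Finite.mem_toFinset]
    constructor
    · exact branch_cover hG hab
    · intro hx hx'
      exact branch_disjoint hG hab hx' hx
  rw [h1, h2]
  ring

theorem maxWS_eq (w : V → ℝ) (v : V) :
    maxWS G w v = sSup {x | ∃ t, G.Adj v t ∧ x = WB G w v t} := rfl

theorem le_maxWS {w : V → ℝ} {v t : V} (ht : G.Adj v t) : WB G w v t ≤ maxWS G w v := by
  rw [maxWS_eq]
  apply le_csSup
  · apply Set.Finite.bddAbove
    have : {x | ∃ t, G.Adj v t ∧ x = WB G w v t}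
        = (fun t => WB G w v t) '' {t | G.Adj v t} := by
      ext x; simp [eq_comm]
    rw [this]
    exact (Set.toFinite _).image _
  · exact ⟨t, ht, rfl⟩

theorem maxWS_le {w : V → ℝ} {v : V} {c : ℝ} (hne : ∃ t, G.Adj v t)
    (hb : ∀ t, G.Adj v t → WB G w v t ≤ c) : maxWS G w v ≤ c := by
  rw [maxWS_eq]
  refine csSup_le ⟨_, ⟨hne.choose, hne.choose_spec, rfl⟩⟩ ?_
  rintro x ⟨t, ht, rfl⟩
  exact hb t ht

theorem exists_adj (hG : G.IsTree) {u v : V} (h : u ≠ v) : ∃ t, G.Adj u t := by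
  have hnil : ¬ (cpath hG u v).Nil := Walk.not_nil_of_ne h
  obtain ⟨t, hadj, q, _⟩ := Walk.not_nil_iff.mp hnil
  exact ⟨t, hadj⟩

theorem key (hG : G.IsTree) {a b v : V} (hab : G.Adj a b) (hv : v ∈ branch G b a) :
    ∃ t, G.Adj v t ∧ branch G a b ⊆ branch G v t := by
  rcases eq_or_ne v a with rfl | hva
  · exact ⟨b, hab, subset_rfl⟩
  · rw [mem_branch_iff hG] at hv
    have hrp : (cpath hG a v).reverse.IsPath := (cpath_isPath hG a v).reverse
    have hnil : ¬ (cpath hG a v).reverse.Nil := Walk.not_nil_of_ne hva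
    obtain ⟨t, hvt, r2, hr2⟩ := Walk.not_nil_iff.mp hnil
    rw [hr2, Walk.cons_isPath_iff] at hrp
    have hbrev : b ∉ (cpath hG a v).reverse.support := by
      rw [Walk.support_reverse, List.mem_reverse]; exact hv
    rw [hr2] at hbrev
    simp only [Walk.support_cons, List.mem_cons] at hbrev
    push_neg at hbrev
    refine ⟨t, hvt, ?_⟩
    intro x hx
    rw [mem_branch_iff hG] at hx
    have hvs : v ∉ (cpath hG b x).support := by
      intro hvsmem
      have h1 : ((cpath hG b x).takeUntil v hvsmem).IsPath :=
        (cpath_isPath hG b x).takeUntil hvsmem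
      have h2 : (Walk.cons hab.symm (cpath hG a v)).IsPath :=
        (cpath_isPath hG a v).cons hv
      have heq : (cpath hG b x).takeUntil v hvsmem = Walk.cons hab.symm (cpath hG a v) :=
        (cpath_eq hG _ h1).trans (cpath_eq hG _ h2).symm
      have ha : a ∈ ((cpath hG b x).takeUntil v hvsmem).support := by
        rw [heq]
        simp [Walk.support_cons, Walk.start_mem_support]
      exact hx ((cpath hG b x).support_takeUntil_subset hvsmem ha)
    refine ⟨(r2.reverse.reverse).append (Walk.cons hab (cpath hG b x)), ?_⟩
    rw [Walk.mem_support_append_iff]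
    rintro (hv1 | hv2)
    · rw [Walk.support_reverse, List.mem_reverse, Walk.support_reverse, List.mem_reverse] at hv1
      exact hrp.2 hv1
    · simp only [Walk.support_cons, List.mem_cons] at hv2
      rcases hv2 with h' | h'
      · exact hva h'
      · exact hvs h'

theorem step (hG : G.IsTree) {w : V → ℝ} (hw : ∀ v, 0 < w v) {v : V}
    (hv : ∀ t, G.Adj v t → WB G w v t ≤ (∑ u, w u) / 2)
    {a b : V} (hab : G.Adj a b) (hmem : v ∈ branch G b a) :
    WB G w a b ≤ (∑ u, w u) / 2 := by
  obtain ⟨t, hvt, hsub⟩ := key hG hab hmem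
  exact le_trans (WB_mono hw hsub) (hv t hvt)

theorem sumWD_le_of_hv (ℓ : V → V → ℝ) (hG : G.IsTree) {w : V → ℝ} (hw : ∀ v, 0 < w v)
    (hℓsym : ∀ u v, ℓ u v = ℓ v u) (hℓpos : ∀ u v, G.Adj u v → 0 < ℓ u v) {v : V}
    (hv : ∀ t, G.Adj v t → WB G w v t ≤ (∑ u, w u) / 2) (u : V) :
    sumWD G ℓ w v ≤ sumWD G ℓ w u := by
  have hall : ∀ (u v' : V) (p : G.Walk u v'), p.IsPath →
      (∀ t, G.Adj v' t → WB G w v' t ≤ (∑ x, w x) / 2) → sumWD G ℓ w v' ≤ sumWD G ℓ w u := by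
    intro u v' p
    induction p with
    | nil => exact fun _ _ => le_refl _
    | @cons u c v'' h q ih =>
      intro hp hv'
      rw [Walk.cons_isPath_iff] at hp
      have h1 := ih hp.1 hv'
      have hcu : WB G w c u ≤ (∑ x, w x) / 2 := step hG hw hv' h.symm ⟨q, hp.2⟩
      have hadd := WB_add hG w h
      have hsub := sumWD_sub ℓ hG w hℓsym hℓpos h
      have hl := hℓpos u c h
      have hd : 0 ≤ WB G w u c - WB G w c u := by linarith
      have := mul_nonneg hl.le hd
      linarith
  exact hall u v (cpath hG u v) (cpath_isPath hG u v) hv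

theorem hv_of_median (ℓ : V → V → ℝ) (hG : G.IsTree) {w : V → ℝ}
    (hℓsym : ∀ u v, ℓ u v = ℓ v u) (hℓpos : ∀ u v, G.Adj u v → 0 < ℓ u v) {v : V}
    (hmed : ∀ u, sumWD G ℓ w v ≤ sumWD G ℓ w u) :
    ∀ t, G.Adj v t → WB G w v t ≤ (∑ u, w u) / 2 := by
  intro t ht
  have hsub := sumWD_sub ℓ hG w hℓsym hℓpos ht
  have hadd := WB_add hG w ht
  have hl := hℓpos v t ht
  have h1 := hmed t
  by_contra hcon
  push_neg at hcon
  have hd : 0 < WB G w v t - WB G w t v := by linarith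
  have := mul_pos hl hd
  linarith

theorem maxWS_le_of_hv (hG : G.IsTree) {w : V → ℝ} (hw : ∀ v, 0 < w v) {v : V}
    (hv : ∀ t, G.Adj v t → WB G w v t ≤ (∑ u, w u) / 2) (u : V) :
    maxWS G w v ≤ maxWS G w u := by
  rcases eq_or_ne u v with rfl | huv
  · exact le_refl _
  · have hnil : ¬ (cpath hG u v).Nil := Walk.not_nil_of_ne huv
    obtain ⟨c, hadj, q, hq⟩ := Walk.not_nil_iff.mp hnil
    have hp := cpath_isPath hG u v
    rw [hq, Walk.cons_isPath_iff] at hp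
    have hcu : WB G w c u ≤ (∑ x, w x) / 2 := step hG hw hv hadj.symm ⟨q, hp.2⟩
    have hadd := WB_add hG w hadj
    calc maxWS G w v ≤ (∑ x, w x) / 2 := maxWS_le (exists_adj hG (Ne.symm huv)) hv
      _ ≤ WB G w u c := by linarith
      _ ≤ maxWS G w u := le_maxWS hadj

theorem hv_of_centroid (ℓ : V → V → ℝ) (hG : G.IsTree) {w : V → ℝ} (hw : ∀ v, 0 < w v)
    (hℓsym : ∀ u v, ℓ u v = ℓ v u) (hℓpos : ∀ u v, G.Adj u v → 0 < ℓ u v) [Nonempty V] {v : V}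
    (hcen : ∀ u, maxWS G w v ≤ maxWS G w u) :
    ∀ t, G.Adj v t → WB G w v t ≤ (∑ u, w u) / 2 := by
  obtain ⟨s, _, hs⟩ := Finset.exists_min_image Finset.univ (sumWD G ℓ w)
    ⟨Classical.arbitrary V, Finset.mem_univ _⟩
  have hvs : ∀ t, G.Adj s t → WB G w s t ≤ (∑ u, w u) / 2 :=
    hv_of_median ℓ hG hℓsym hℓpos fun u => hs u (Finset.mem_univ u)
  rcases eq_or_ne v s with rfl | hvsne
  · exact hvs
  · intro t ht
    calc WB G w v t ≤ maxWS G w v := le_maxWS ht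
      _ ≤ maxWS G w s := hcen s
      _ ≤ (∑ u, w u) / 2 := maxWS_le (exists_adj hG hvsne.symm) hvs

end KHaux

/-- Kariv–Hakimi: a vertex of a finite weighted tree is a weighted median (minimizes
`SumWD`) iff it is a weighted centroid (minimizes `MaxWS`). -/
theorem stmt10 {V : Type*} [Fintype V] [DecidableEq V] [Nonempty V]
    (G : SimpleGraph V) (hG : G.IsTree)
    (w : V → ℝ) (hw : ∀ v, 0 < w v)
    (ℓ : V → V → ℝ) (hℓsym : ∀ u v, ℓ u v = ℓ v u)
    (hℓpos : ∀ u v, G.Adj u v → 0 < ℓ u v) (v : V) :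
    (∀ u : V, sumWD G ℓ w v ≤ sumWD G ℓ w u) ↔ (∀ u : V, maxWS G w v ≤ maxWS G w u) := by
  constructor
  · intro hmed
    exact KHaux.maxWS_le_of_hv hG hw (KHaux.hv_of_median ℓ hG hℓsym hℓpos hmed)
  · intro hcen
    exact KHaux.sumWD_le_of_hv ℓ hG hw hℓsym hℓpos
      (KHaux.hv_of_centroid ℓ hG hw hℓsym hℓpos hcen)
end
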